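/- For all integers n ≥ 1 and k ≥ 1, det(C_{2n+2i+2j}^{(2k)})_{0≤i,j≤k−1} = (k+1)^{n−1}. -/

import Mathlib

/-- Number of bounded up-down paths from `(0,r)` to `(n,s)` staying weakly
between the lines `y = 0` and `y = k`. -/
noncomputable def pathCount (k n r s : ℕ) : ℕ :=
  Nat.card {h : Fin (n + 1) → ℤ //
    h 0 = r ∧ h (Fin.last n) = s ∧
    (∀ i, 0 ≤ h i ∧ h i ≤ k) ∧
    (∀ i : Fin n, |h i.succ - h i.castSucc| = 1)}

namespace Stmt15
open Polynomial Matrix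


/-- Chebyshev-like polynomials: `S n (2 cos θ) = sin((n+1)θ)/sin θ`. -/
noncomputable def S : ℕ → Polynomial ℤ
  | 0 => 1
  | 1 => X
  | (n+2) => X * S (n+1) - S n

lemma S_add_two (n : ℕ) : S (n+2) = X * S (n+1) - S n := rfl

lemma S_comp_monic (g : Polynomial ℤ) (hg : g.Monic) (hgd : g.natDegree = 1) :
    ∀ n, ((S n).comp g).Monic ∧ ((S n).comp g).natDegree = n := by
  have key : ∀ n, (((S n).comp g).Monic ∧ ((S n).comp g).natDegree = n) ∧
      (((S (n+1)).comp g).Monic ∧ ((S (n+1)).comp g).natDegree = n+1) := by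
    intro n
    induction n with
    | zero =>
      refine ⟨⟨?_, ?_⟩, ?_, ?_⟩ <;> simp [S, monic_one, hg, hgd]
    | succ n ih =>
      obtain ⟨⟨h1m, h1d⟩, h2m, h2d⟩ := ih
      have hcomp : (S (n+2)).comp g = g * (S (n+1)).comp g - (S n).comp g := by
        rw [S_add_two]; simp [sub_comp, mul_comp]
      have hmul : (g * (S (n+1)).comp g).Monic := hg.mul h2m
      have hmuld : (g * (S (n+1)).comp g).natDegree = n + 2 := by
        rw [hg.natDegree_mul h2m, hgd, h2d]; omega
      have hlt : ((S n).comp g).natDegree < (g * (S (n+1)).comp g).natDegree := by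
        rw [hmuld, h1d]; omega
      have hm : ((S (n+2)).comp g).Monic := by
        rw [hcomp]
        exact hmul.sub_of_left (Polynomial.degree_lt_degree hlt)
      refine ⟨⟨h2m, h2d⟩, hm, ?_⟩
      rw [hcomp, Polynomial.natDegree_sub_eq_left_of_natDegree_lt hlt, hmuld]
  exact fun n => (key n).1

lemma S_monic (n : ℕ) : (S n).Monic ∧ (S n).natDegree = n := by
  have := S_comp_monic X monic_X natDegree_X n
  simpa using this

lemma S_eval_neg_two (n : ℕ) : (S n).eval (-2) = (-1)^n * (n+1) := by
  have key : ∀ n : ℕ, (S n).eval (-2) = (-1)^n * (n+1) ∧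
      (S (n+1)).eval (-2) = (-1)^(n+1) * (n+2) := by
    intro n
    induction n with
    | zero => norm_num [S]
    | succ n ih =>
      obtain ⟨h1, h2⟩ := ih
      refine ⟨h2, ?_⟩
      rw [S_add_two]
      simp only [eval_sub, eval_mul, eval_X, h1, h2]
      push_cast
      ring
  exact (key n).1

lemma S_odd (j : ℕ) : S (2*j+1) = X * (S j).comp (X^2 - C 2) := by
  have four : ∀ m, S (m+4) = (X^2 - C 2) * S (m+2) - S m := by
    intro m
    have e1 : S (m+4) = X * S (m+3) - S (m+2) := rfl
    have e2 : S (m+3) = X * S (m+2) - S (m+1) := rfl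
    have e3 : S (m+2) = X * S (m+1) - S m := rfl
    have e4 : X * S (m+1) = S (m+2) + S m := by rw [e3]; ring
    have hC : (C 2 : ℤ[X]) = 2 := by norm_num
    rw [hC]
    linear_combination e1 + X * e2 + e3
  have key : ∀ j, S (2*j+1) = X * (S j).comp (X^2 - C 2) ∧
      S (2*(j+1)+1) = X * (S (j+1)).comp (X^2 - C 2) := by
    intro j
    induction j with
    | zero =>
      constructor
      · simp [S]
      · show S 3 = _
        have : S 3 = X * S 2 - S 1 := rfl
        have h2 : S 2 = X * S 1 - S 0 := rfl
        simp [this, h2, S]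
        ring
    | succ j ih =>
      obtain ⟨h1, h2⟩ := ih
      refine ⟨h2, ?_⟩
      rw [show 2*(j+2)+1 = (2*j+1) + 4 from by ring, four,
        show 2*j+1+2 = 2*(j+1)+1 from by ring, h2, h1, S_add_two]
      simp only [sub_comp, mul_comp, X_comp]
      ring
  exact (key j).1

lemma S_zero : S 0 = 1 := rfl
lemma S_one : S 1 = X := rfl
/-- Adjacency matrix of the path on `{0, …, 2k}`. -/
def MM (k : ℕ) : Matrix (Fin (2*k+1)) (Fin (2*k+1)) ℤ :=
  Matrix.of fun i j => if (i:ℕ) + 1 = (j:ℕ) ∨ (j:ℕ) + 1 = (i:ℕ) then 1 else 0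

/-- `fseq k m j` = number of up-down paths from 0 to j of length m inside [0, 2k]. -/
def fseq (k : ℕ) : ℕ → ℕ → ℤ
  | 0, j => if j = 0 then 1 else 0
  | (m+1), j => if 2*k < j then 0 else
      (if j = 0 then 0 else fseq k m (j-1)) + fseq k m (j+1)

lemma fseq_gt (k m j : ℕ) (h : 2*k < j) : fseq k m j = 0 := by
  cases m with
  | zero => simp [fseq, show j ≠ 0 by omega]
  | succ m => simp [fseq, h]

lemma fseq_succ (k m j : ℕ) (h : j ≤ 2*k) :
    fseq k (m+1) j = (if j = 0 then 0 else fseq k m (j-1)) + fseq k m (j+1) := by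
  simp [fseq, show ¬ (2*k < j) by omega]

lemma neighbor_sum (k : ℕ) (w : ℕ → ℤ) (hw : ∀ t, 2*k < t → w t = 0) (j : Fin (2*k+1)) :
    (∑ t : Fin (2*k+1), (MM k) j t * w t) =
      (if (j:ℕ) = 0 then 0 else w ((j:ℕ)-1)) + w ((j:ℕ)+1) := by
  have hconv : (∑ t : Fin (2*k+1), (MM k) j t * w t) =
      ∑ t ∈ Finset.range (2*k+1),
        (if (j:ℕ) + 1 = t ∨ t + 1 = (j:ℕ) then (1:ℤ) else 0) * w t := by
    rw [← Fin.sum_univ_eq_sum_range (fun t => (if (j:ℕ)+1 = t ∨ t+1 = (j:ℕ) then (1:ℤ) else 0) * w t)]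
    rfl
  rw [hconv]
  have hsplit : ∀ t, (if (j:ℕ) + 1 = t ∨ t + 1 = (j:ℕ) then (1:ℤ) else 0) * w t =
      (if (j:ℕ) + 1 = t then w t else 0) + (if t = (j:ℕ) - 1 ∧ (j:ℕ) ≠ 0 then w t else 0) := by
    intro t
    by_cases h1 : (j:ℕ)+1 = t
    · have h2 : ¬ (t = (j:ℕ)-1 ∧ (j:ℕ) ≠ 0) := by omega
      rw [if_pos (Or.inl h1), one_mul, if_pos h1, if_neg h2, add_zero]
    · by_cases h2 : t+1 = (j:ℕ)
      · have h3 : t = (j:ℕ)-1 ∧ (j:ℕ) ≠ 0 := by omega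
        rw [if_pos (Or.inr h2), one_mul, if_neg h1, if_pos h3, zero_add]
      · have h3 : ¬ (t = (j:ℕ)-1 ∧ (j:ℕ) ≠ 0) := by omega
        rw [if_neg (not_or.mpr ⟨h1, h2⟩), if_neg h1, if_neg h3, zero_mul, add_zero]
  rw [Finset.sum_congr rfl (fun t _ => hsplit t), Finset.sum_add_distrib]
  have e1 : (∑ t ∈ Finset.range (2*k+1), if (j:ℕ) + 1 = t then w t else 0) = w ((j:ℕ)+1) := by
    rw [Finset.sum_ite_eq]
    by_cases h : (j:ℕ) + 1 ∈ Finset.range (2*k+1)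
    · simp [h]
    · rw [if_neg h, hw ((j:ℕ)+1) (by simp [Finset.mem_range] at h; omega)]
  have e2 : (∑ t ∈ Finset.range (2*k+1), if t = (j:ℕ) - 1 ∧ (j:ℕ) ≠ 0 then w t else 0) =
      (if (j:ℕ) = 0 then 0 else w ((j:ℕ)-1)) := by
    by_cases hj : (j:ℕ) = 0
    · simp [hj]
    · have : ∀ t, (if t = (j:ℕ) - 1 ∧ (j:ℕ) ≠ 0 then w t else 0) =
          (if t = (j:ℕ) - 1 then w t else 0) := by
        intro t; by_cases h : t = (j:ℕ)-1 <;> simp [h, hj]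
      rw [Finset.sum_congr rfl (fun t _ => this t), Finset.sum_ite_eq']
      have hmem : (j:ℕ) - 1 ∈ Finset.range (2*k+1) :=
        Finset.mem_range.mpr (by have := j.isLt; omega)
      simp [hmem, hj]
  rw [e1, e2]; ring

lemma bridge (k : ℕ) : ∀ m (j : Fin (2*k+1)), ((MM k)^m) j 0 = fseq k m (j:ℕ) := by
  intro m
  induction m with
  | zero =>
    intro j
    rw [pow_zero, Matrix.one_apply]
    show _ = if (j:ℕ) = 0 then 1 else 0
    by_cases h : (j:ℕ) = 0
    · rw [if_pos (Fin.ext h), if_pos h]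
    · rw [if_neg (fun hc => h (by rw [hc]; rfl)), if_neg h]
  | succ m ih =>
    intro j
    rw [pow_succ', Matrix.mul_apply]
    have : (∑ t : Fin (2*k+1), (MM k) j t * ((MM k)^m) t 0) =
        ∑ t : Fin (2*k+1), (MM k) j t * fseq k m (t:ℕ) := by
      refine Finset.sum_congr rfl fun t _ => by rw [ih t]
    rw [this, neighbor_sum k (fun t => fseq k m t) (fun t ht => fseq_gt k m t ht) j]
    rw [fseq_succ k m (j:ℕ) (by have := j.isLt; omega)]

lemma MM_symm (k : ℕ) : (MM k)ᵀ = MM k := by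
  ext i j
  simp [MM, Matrix.transpose_apply, or_comm]

lemma cvec (k : ℕ) : ∀ j, j ≤ 2*k → ∀ l : Fin (2*k+1),
    (Polynomial.aeval (MM k) (S j)) l 0 = if (l:ℕ) = j then 1 else 0 := by
  intro j
  induction j using Nat.strong_induction_on with
  | _ j ih =>
    match j with
    | 0 =>
      intro _ l
      have h0 : ((0 : Fin (2*k+1)) : ℕ) = 0 := rfl
      rw [S_zero, map_one, Matrix.one_apply]
      by_cases h : (l:ℕ) = 0
      · rw [if_pos (Fin.ext h), if_pos h]
      · rw [if_neg (fun hc => h (by rw [hc]; rfl)), if_neg h]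
    | 1 =>
      intro _ l
      have h0 : ((0 : Fin (2*k+1)) : ℕ) = 0 := rfl
      simp only [S_one, Polynomial.aeval_X, MM, Matrix.of_apply, h0]
      by_cases h : (l:ℕ) = 1
      · rw [if_pos (by omega : (l:ℕ) + 1 = 0 ∨ 0 + 1 = (l:ℕ)), if_pos h]
      · rw [if_neg (by omega : ¬((l:ℕ) + 1 = 0 ∨ 0 + 1 = (l:ℕ))), if_neg h]
    | (j+2) =>
      intro hj l
      have e : Polynomial.aeval (MM k) (S (j+2)) =
          (MM k) * Polynomial.aeval (MM k) (S (j+1)) - Polynomial.aeval (MM k) (S j) := by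
        rw [S_add_two]; simp
      rw [e, Matrix.sub_apply, Matrix.mul_apply]
      have h1 := ih (j+1) (by omega) (by omega)
      have h0 := ih j (by omega) (by omega)
      have : (∑ t : Fin (2*k+1), (MM k) l t * (Polynomial.aeval (MM k) (S (j+1))) t 0) =
          ∑ t : Fin (2*k+1), (MM k) l t * (fun t : ℕ => if t = j+1 then (1:ℤ) else 0) (t:ℕ) := by
        refine Finset.sum_congr rfl fun t _ => by rw [h1 t]
      rw [this, neighbor_sum k (fun t : ℕ => if t = j+1 then (1:ℤ) else 0)
        (fun t ht => if_neg (by omega)) l, h0 l]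
      have hl := l.isLt
      split_ifs <;> omega

lemma cvec_top (k : ℕ) (hk : 1 ≤ k) : ∀ l : Fin (2*k+1),
    (Polynomial.aeval (MM k) (S (2*k+1))) l 0 = 0 := by
  intro l
  have hS : S (2*k+1) = X * S (2*k) - S (2*k-1) := by
    have h := S_add_two (2*k-1)
    rw [show 2*k-1+2 = 2*k+1 from by omega, show 2*k-1+1 = 2*k from by omega] at h
    exact h
  have e : Polynomial.aeval (MM k) (S (2*k+1)) =
      (MM k) * Polynomial.aeval (MM k) (S (2*k)) - Polynomial.aeval (MM k) (S (2*k-1)) := by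
    rw [hS]; simp
  rw [e, Matrix.sub_apply, Matrix.mul_apply]
  have h1 := cvec k (2*k) le_rfl
  have h0 := cvec k (2*k-1) (by omega)
  have : (∑ t : Fin (2*k+1), (MM k) l t * (Polynomial.aeval (MM k) (S (2*k))) t 0) =
      ∑ t : Fin (2*k+1), (MM k) l t * (fun t : ℕ => if t = 2*k then (1:ℤ) else 0) (t:ℕ) := by
    refine Finset.sum_congr rfl fun t _ => by rw [h1 t]
  rw [this, neighbor_sum k (fun t : ℕ => if t = 2*k then (1:ℤ) else 0)
    (fun t ht => if_neg (by omega)) l, h0 l]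
  have hl := l.isLt
  split_ifs <;> omega

def aseq (k m : ℕ) : ℤ := fseq k (2*m) 0

lemma aseq_matrix (k m : ℕ) : aseq k m = ((MM k)^(2*m)) 0 0 := by
  have := bridge k (2*m) (0 : Fin (2*k+1))
  simpa [aseq] using this.symm

noncomputable def Qp (k : ℕ) : Polynomial ℤ := (S k).comp (X - C 2)

lemma Qp_monic (k : ℕ) : (Qp k).Monic ∧ (Qp k).natDegree = k :=
  S_comp_monic (X - C 2) (monic_X_sub_C 2) (natDegree_X_sub_C 2) k

lemma Qp_coeff_zero (k : ℕ) : (Qp k).coeff 0 = (-1)^k * (k+1) := by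
  rw [Polynomial.coeff_zero_eq_eval_zero, Qp, Polynomial.eval_comp]
  have : Polynomial.eval 0 (X - C 2 : Polynomial ℤ) = -2 := by simp
  rw [this, S_eval_neg_two k]

lemma key2 (k : ℕ) :
    (MM k) * Polynomial.aeval ((MM k) * (MM k)) (Qp k) = Polynomial.aeval (MM k) (S (2*k+1)) := by
  rw [S_odd k, _root_.map_mul, Polynomial.aeval_X, Qp, Polynomial.aeval_comp, Polynomial.aeval_comp]
  have h : Polynomial.aeval ((MM k)*(MM k)) (X - C 2 : Polynomial ℤ)
      = Polynomial.aeval (MM k) (X^2 - C 2 : Polynomial ℤ) := by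
    simp only [map_sub, Polynomial.aeval_X, Polynomial.aeval_C, sq, _root_.map_mul]
  rw [h]

lemma recur (k : ℕ) (hk : 1 ≤ k) (m : ℕ) (hm : 1 ≤ m) :
    (∑ t ∈ Finset.range (k+1), (Qp k).coeff t * aseq k (m+t)) = 0 := by
  obtain ⟨m', rfl⟩ : ∃ m', m = m'+1 := ⟨m-1, by omega⟩
  have hmat : ∀ t : ℕ, (MM k)^(2*(m'+1+t)) = (MM k)^(2*m'+2) * ((MM k)*(MM k))^t := by
    intro t
    rw [← sq, ← pow_mul, ← pow_add]
    congr 1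
    ring
  have hsum : (∑ t ∈ Finset.range (k+1), (Qp k).coeff t • (MM k)^(2*(m'+1+t)))
      = (MM k)^(2*m'+1) * Polynomial.aeval (MM k) (S (2*k+1)) := by
    calc (∑ t ∈ Finset.range (k+1), (Qp k).coeff t • (MM k)^(2*(m'+1+t)))
        = ∑ t ∈ Finset.range (k+1), (Qp k).coeff t • ((MM k)^(2*m'+2) * ((MM k)*(MM k))^t) := by
          exact Finset.sum_congr rfl fun t _ => by rw [hmat t]
      _ = (MM k)^(2*m'+2) * ∑ t ∈ Finset.range (k+1), (Qp k).coeff t • ((MM k)*(MM k))^t := by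
          rw [Finset.mul_sum]
          exact Finset.sum_congr rfl fun t _ => (mul_smul_comm _ _ _).symm
      _ = (MM k)^(2*m'+2) * Polynomial.aeval ((MM k)*(MM k)) (Qp k) := by
          rw [← Polynomial.aeval_eq_sum_range' (by rw [(Qp_monic k).2]; omega)]
      _ = (MM k)^(2*m'+1) * ((MM k) * Polynomial.aeval ((MM k)*(MM k)) (Qp k)) := by
          rw [← mul_assoc, ← pow_succ]
      _ = (MM k)^(2*m'+1) * Polynomial.aeval (MM k) (S (2*k+1)) := by rw [key2]
  have lhs_eq : (∑ t ∈ Finset.range (k+1), (Qp k).coeff t * aseq k (m'+1+t))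
      = (∑ t ∈ Finset.range (k+1), (Qp k).coeff t • (MM k)^(2*(m'+1+t))) 0 0 := by
    rw [Matrix.sum_apply]
    exact Finset.sum_congr rfl fun t _ => by
      rw [aseq_matrix, Matrix.smul_apply, smul_eq_mul]
  rw [lhs_eq, hsum, Matrix.mul_apply]
  refine Finset.sum_eq_zero fun l _ => ?_
  rw [cvec_top k hk l, mul_zero]

/-- The Hankel matrix of interest. -/
def Hk (k n : ℕ) : Matrix (Fin k) (Fin k) ℤ :=
  Matrix.of fun i j : Fin k => aseq k (n + (i:ℕ) + (j:ℕ))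

lemma fseq_out (k : ℕ) : ∀ m j, m < j → fseq k m j = 0 := by
  intro m
  induction m with
  | zero => intro j hj; simp [fseq, show j ≠ 0 by omega]
  | succ m ih =>
    intro j hj
    by_cases h : 2*k < j
    · exact fseq_gt k _ j h
    · rw [fseq_succ k m j (by omega), ih (j-1) (by omega), ih (j+1) (by omega)]
      simp

lemma fseq_diag (k : ℕ) : ∀ m, m ≤ 2*k → fseq k m m = 1 := by
  intro m
  induction m with
  | zero => simp [fseq]
  | succ m ih =>
    intro hm
    rw [fseq_succ k m (m+1) hm, if_neg (Nat.succ_ne_zero m), Nat.add_sub_cancel,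
      ih (by omega), fseq_out k m (m+2) (by omega)]
    simp

lemma fseq_parity (k : ℕ) : ∀ m j, (j + m) % 2 = 1 → fseq k m j = 0 := by
  intro m
  induction m with
  | zero => intro j hj; simp [fseq, show j ≠ 0 by omega]
  | succ m ih =>
    intro j hj
    by_cases h : 2*k < j
    · exact fseq_gt k _ j h
    · rw [fseq_succ k m j (by omega), ih (j+1) (by omega)]
      by_cases h0 : j = 0
      · simp [h0]
      · rw [if_neg h0, ih (j-1) (by omega)]
        simp

lemma pow_symm (k a : ℕ) (i j : Fin (2*k+1)) : ((MM k)^a) i j = ((MM k)^a) j i := by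
  have h : (MM k)^a = ((MM k)^a)ᵀ := by rw [Matrix.transpose_pow, MM_symm]
  conv_lhs => rw [h]
  rfl

lemma gram (k : ℕ) (i j : Fin k) :
    aseq k (1 + (i:ℕ) + (j:ℕ)) =
      ∑ l ∈ Finset.range k, fseq k (1+2*(i:ℕ)) (2*l+1) * fseq k (1+2*(j:ℕ)) (2*l+1) := by
  have e1 : aseq k (1 + (i:ℕ) + (j:ℕ))
      = ∑ l : Fin (2*k+1), ((MM k)^(1+2*(i:ℕ))) 0 l * ((MM k)^(1+2*(j:ℕ))) l 0 := by
    rw [aseq_matrix, show 2*(1 + (i:ℕ) + (j:ℕ)) = (1+2*(i:ℕ)) + (1+2*(j:ℕ)) from by ring,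
      pow_add, Matrix.mul_apply]
  have e2 : aseq k (1 + (i:ℕ) + (j:ℕ))
      = ∑ l ∈ Finset.range (2*k+1), fseq k (1+2*(i:ℕ)) l * fseq k (1+2*(j:ℕ)) l := by
    rw [e1, ← Fin.sum_univ_eq_sum_range (fun l => fseq k (1+2*(i:ℕ)) l * fseq k (1+2*(j:ℕ)) l)]
    refine Finset.sum_congr rfl fun l _ => ?_
    rw [pow_symm, bridge, bridge]
  rw [e2]
  have hfil : (∑ l ∈ Finset.range (2*k+1), fseq k (1+2*(i:ℕ)) l * fseq k (1+2*(j:ℕ)) l)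
      = ∑ l ∈ (Finset.range (2*k+1)).filter (fun l => l % 2 = 1),
          fseq k (1+2*(i:ℕ)) l * fseq k (1+2*(j:ℕ)) l := by
    refine (Finset.sum_filter_of_ne ?_).symm
    intro l _ hne
    by_contra hodd
    exact hne (by rw [fseq_parity k _ l (by omega), zero_mul])
  rw [hfil]
  refine Finset.sum_nbij' (fun l => (l-1)/2) (fun l => 2*l+1) ?_ ?_ ?_ ?_ ?_
  · intro a ha
    simp only [Finset.mem_filter, Finset.mem_range] at ha ⊢
    omega
  · intro a ha
    simp only [Finset.mem_filter, Finset.mem_range] at ha ⊢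
    omega
  · intro a ha
    simp only [Finset.mem_filter, Finset.mem_range] at ha
    show 2*((a-1)/2)+1 = a
    omega
  · intro a ha
    simp only [Finset.mem_range] at ha
    show (2*a+1-1)/2 = a
    omega
  · intro a ha
    simp only [Finset.mem_filter, Finset.mem_range] at ha
    have h2 : 2*((a-1)/2)+1 = a := by omega
    rw [h2]

/-- Triangular matrix whose Gram matrix is `Hk k 1`. -/
def Wm (k : ℕ) : Matrix (Fin k) (Fin k) ℤ :=
  Matrix.of fun l i : Fin k => fseq k (1+2*(i:ℕ)) (2*(l:ℕ)+1)

lemma hk1 (k : ℕ) : Hk k 1 = (Wm k)ᵀ * (Wm k) := by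
  ext i j
  rw [Matrix.mul_apply]
  show aseq k (1 + (i:ℕ) + (j:ℕ)) = ∑ l : Fin k, (Wm k) l i * (Wm k) l j
  rw [gram k i j,
    ← Fin.sum_univ_eq_sum_range (fun l => fseq k (1+2*(i:ℕ)) (2*l+1) * fseq k (1+2*(j:ℕ)) (2*l+1))]
  rfl

lemma Wm_det (k : ℕ) : (Wm k).det = 1 := by
  have htri : (Wm k).BlockTriangular id := by
    intro i j hij
    exact fseq_out k _ _ (by simp only [id] at hij; omega)
  rw [Matrix.det_of_upperTriangular htri]
  refine Finset.prod_eq_one fun i _ => ?_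
  show fseq k (1+2*(i:ℕ)) (2*(i:ℕ)+1) = 1
  rw [show 2*(i:ℕ)+1 = 1+2*(i:ℕ) from by ring]
  exact fseq_diag k _ (by have := i.isLt; omega)

lemma det_base (k : ℕ) : (Hk k 1).det = 1 := by
  rw [hk1, Matrix.det_mul, Matrix.det_transpose, Wm_det]; ring

lemma recur' (k : ℕ) (hk : 1 ≤ k) (m : ℕ) (hm : 1 ≤ m) :
    aseq k (m+k) = -∑ t ∈ Finset.range k, (Qp k).coeff t * aseq k (m+t) := by
  have h := recur k hk m hm
  rw [Finset.sum_range_succ] at h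
  have hc : (Qp k).coeff k = 1 := by
    have h1 := (Qp_monic k).1.coeff_natDegree
    rwa [(Qp_monic k).2] at h1
  rw [hc] at h
  linarith

/-- Companion-type matrix. -/
noncomputable def Cm (k : ℕ) : Matrix (Fin k) (Fin k) ℤ :=
  Matrix.of fun t j : Fin k =>
    if (j:ℕ) = k - 1 then -(Qp k).coeff (t:ℕ) else if (t:ℕ) = (j:ℕ)+1 then 1 else 0

lemma hstep_mat (k : ℕ) (hk : 1 ≤ k) (n : ℕ) (hn : 1 ≤ n) :
    Hk k (n+1) = Hk k n * Cm k := by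
  ext i j
  rw [Matrix.mul_apply]
  simp only [Hk, Cm, Matrix.of_apply]
  by_cases hj : (j:ℕ) = k-1
  · have e : (∑ t : Fin k, aseq k (n + (i:ℕ) + (t:ℕ)) *
        (if (j:ℕ) = k - 1 then -(Qp k).coeff (t:ℕ) else if (t:ℕ) = (j:ℕ)+1 then 1 else 0))
        = ∑ t : Fin k, -((Qp k).coeff (t:ℕ) * aseq k ((n+(i:ℕ))+(t:ℕ))) := by
      refine Finset.sum_congr rfl fun t _ => ?_
      rw [if_pos hj, show n + (i:ℕ) + (t:ℕ) = n + (i:ℕ) + (t:ℕ) from rfl]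
      ring
    rw [e, Fin.sum_univ_eq_sum_range (fun t => -((Qp k).coeff t * aseq k ((n+(i:ℕ))+t))),
      Finset.sum_neg_distrib, ← recur' k hk (n+(i:ℕ)) (by omega)]
    congr 1
    omega
  · have hjk : (j:ℕ)+1 < k := by have := j.isLt; omega
    have e : (∑ t : Fin k, aseq k (n + (i:ℕ) + (t:ℕ)) *
        (if (j:ℕ) = k - 1 then -(Qp k).coeff (t:ℕ) else if (t:ℕ) = (j:ℕ)+1 then 1 else 0))
        = ∑ t : Fin k, (if (t:ℕ) = (j:ℕ)+1 then aseq k (n+(i:ℕ)+(t:ℕ)) else 0) := by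
      refine Finset.sum_congr rfl fun t _ => ?_
      rw [if_neg hj]
      by_cases ht : (t:ℕ) = (j:ℕ)+1 <;> simp [ht]
    rw [e, Fin.sum_univ_eq_sum_range (fun t => if t = (j:ℕ)+1 then aseq k (n+(i:ℕ)+t) else 0),
      Finset.sum_ite_eq', if_pos (Finset.mem_range.mpr hjk)]
    congr 1
    omega

lemma Cm_det (k : ℕ) (hk : 1 ≤ k) : (Cm k).det = (k:ℤ)+1 := by
  obtain ⟨k', rfl⟩ : ∃ k', k = k'+1 := ⟨k-1, by omega⟩
  set σ : Equiv.Perm (Fin (k'+1)) := finRotate (k'+1) with hσ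
  have hval : ∀ i : Fin (k'+1), ((σ i : Fin (k'+1)) : ℕ) =
      if (i:ℕ) = k' then 0 else (i:ℕ)+1 := by
    intro i
    rw [hσ, finRotate_succ_apply, Fin.val_add_one]
    by_cases h : i = Fin.last k'
    · simp [h, Fin.val_last]
    · have hne : (i:ℕ) ≠ k' := fun hc => h (Fin.ext hc)
      simp [h, hne]
  have htri : ((Cm (k'+1)).submatrix σ id).BlockTriangular id := by
    intro i j hij
    have h2 : (j:ℕ) < (i:ℕ) := hij
    show (if (j:ℕ) = k'+1-1 then -(Qp (k'+1)).coeff ((σ i : Fin (k'+1)):ℕ)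
      else if ((σ i : Fin (k'+1)):ℕ) = (j:ℕ)+1 then 1 else 0) = 0
    have hj : (j:ℕ) ≠ k' := by have h1 := i.isLt; omega
    rw [if_neg (by omega : ¬ ((j:ℕ) = k'+1-1)), hval i]
    by_cases h : (i:ℕ) = k'
    · rw [if_pos h, if_neg (by omega)]
    · rw [if_neg h, if_neg (by omega)]
  have hdiag : ∀ i : Fin (k'+1), ((Cm (k'+1)).submatrix σ id) i i =
      (fun i : Fin (k'+1) => if i = Fin.last k' then -(Qp (k'+1)).coeff 0 else 1) i := by
    intro i
    show (if (i:ℕ) = k'+1-1 then -(Qp (k'+1)).coeff ((σ i : Fin (k'+1)):ℕ)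
      else if ((σ i : Fin (k'+1)):ℕ) = (i:ℕ)+1 then 1 else 0) = _
    by_cases h : (i:ℕ) = k'
    · have hl : i = Fin.last k' := Fin.ext (by simpa using h)
      rw [if_pos (by omega), hval i, if_pos h]
      simp [hl]
    · have hl : ¬ (i = Fin.last k') := fun hc => h (by simp [hc])
      rw [if_neg (by omega), hval i, if_neg h, if_pos rfl]
      simp [hl]
  have hdet : ((Cm (k'+1)).submatrix σ id).det = -(Qp (k'+1)).coeff 0 := by
    rw [Matrix.det_of_upperTriangular htri, Finset.prod_congr rfl (fun i _ => hdiag i),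
      Finset.prod_ite_eq' Finset.univ (Fin.last k') (fun _ => -(Qp (k'+1)).coeff 0)]
    simp
  have hperm := Matrix.det_permute σ (Cm (k'+1))
  rw [hdet, hσ, sign_finRotate] at hperm
  push_cast at hperm
  have h1 : ((-1:ℤ)^k') * ((-1:ℤ)^k') = 1 := by rw [← mul_pow]; norm_num
  have hc0 : (Qp (k'+1)).coeff 0 = (-1)^(k'+1) * ((k':ℤ)+1+1) := by
    rw [Qp_coeff_zero (k'+1)]
    push_cast
    ring
  rw [hc0] at hperm
  push_cast
  linear_combination (-((-1:ℤ)^k')) * hperm - ((Cm (k'+1)).det - ((k':ℤ)+2)) * h1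

def PT (K n r s : ℕ) := {h : Fin (n + 1) → ℤ //
    h 0 = (r:ℤ) ∧ h (Fin.last n) = (s:ℤ) ∧
    (∀ i, 0 ≤ h i ∧ h i ≤ (K:ℤ)) ∧
    (∀ i : Fin n, |h i.succ - h i.castSucc| = 1)}

lemma pathCount_eq (K n r s : ℕ) : pathCount K n r s = Nat.card (PT K n r s) := rfl

instance (K n r s : ℕ) : Finite (PT K n r s) := by
  have hb : ∀ (h : PT K n r s) (i : Fin (n+1)), h.1 i ∈ Set.Icc (0:ℤ) (K:ℤ) :=
    fun h i => ⟨(h.2.2.2.1 i).1, (h.2.2.2.1 i).2⟩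
  apply Finite.of_injective
    (fun h : PT K n r s => (fun i => (⟨h.1 i, hb h i⟩ : Set.Icc (0:ℤ) (K:ℤ))))
  intro a b hab
  apply Subtype.ext
  funext i
  exact congrArg Subtype.val (congrFun hab i)

lemma pc_zero (K s : ℕ) : pathCount K 0 0 s = if s = 0 then 1 else 0 := by
  rw [pathCount_eq]
  by_cases hs : s = 0
  · subst hs
    rw [if_pos rfl]
    haveI : Unique (PT K 0 0 0) := {
      default := ⟨fun _ => 0,
        by norm_num, by norm_num, fun i => ⟨le_refl 0, Int.natCast_nonneg K⟩,
        fun i => i.elim0⟩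
      uniq := fun h => by
        apply Subtype.ext
        funext i
        have h0 := h.2.1
        have hi : i = 0 := Fin.ext (by omega)
        rw [hi, h0]
        norm_num }
    exact Nat.card_unique
  · rw [if_neg hs]
    have : IsEmpty (PT K 0 0 s) := ⟨fun h => by
      have h1 := h.2.1
      have h2 : h.1 0 = (s:ℤ) := h.2.2.1
      rw [h1] at h2
      exact hs (by exact_mod_cast h2.symm)⟩
    exact Nat.card_eq_zero.mpr (Or.inl this)

lemma pc_top (K n r s : ℕ) (h : K < s) : pathCount K n r s = 0 := by
  rw [pathCount_eq]
  have : IsEmpty (PT K n r s) := ⟨fun hh => by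
    have h2 := hh.2.2.1
    have h3 := (hh.2.2.2.1 (Fin.last n)).2
    rw [h2] at h3
    have : s ≤ K := by exact_mod_cast h3
    omega⟩
  exact Nat.card_eq_zero.mpr (Or.inl this)

lemma step_last (K n r s : ℕ) (h : PT K (n+1) r s) :
    |(s:ℤ) - h.1 ((Fin.last n).castSucc)| = 1 := by
  have hst := h.2.2.2.2 (Fin.last n)
  rw [Fin.succ_last, h.2.2.1] at hst
  exact hst

lemma prev_cases (K n r s : ℕ) (h : PT K (n+1) r s) :
    h.1 ((Fin.last n).castSucc) = (s:ℤ) - 1 ∨ h.1 ((Fin.last n).castSucc) = (s:ℤ) + 1 := by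
  have := step_last K n r s h
  rcases (abs_eq (by norm_num : (0:ℤ) ≤ 1)).mp this with h' | h'
  · left; linarith
  · right; linarith

lemma init_prop (K n r s : ℕ) (s' : ℤ) (h : PT K (n+1) r s)
    (hv : h.1 ((Fin.last n).castSucc) = s') :
    (Fin.init h.1) 0 = (r:ℤ) ∧ (Fin.init h.1) (Fin.last n) = s' ∧
    (∀ i, 0 ≤ Fin.init h.1 i ∧ Fin.init h.1 i ≤ (K:ℤ)) ∧
    (∀ i : Fin n, |Fin.init h.1 i.succ - Fin.init h.1 i.castSucc| = 1) := by
  obtain ⟨h0, hl, hb, hst⟩ := h.2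
  refine ⟨?_, hv, fun i => hb _, fun i => ?_⟩
  · show h.1 (Fin.castSucc 0) = _
    rw [Fin.castSucc_zero, h0]
  · have := hst i.castSucc
    rw [Fin.succ_castSucc] at this
    exact this

lemma snoc_prop (K n r s s' : ℕ) (g : PT K n r s') (hdiff : |(s:ℤ) - (s':ℤ)| = 1)
    (hsK : s ≤ K) :
    (Fin.snoc g.1 (s:ℤ) : Fin (n+2) → ℤ) 0 = (r:ℤ) ∧
    (Fin.snoc g.1 (s:ℤ) : Fin (n+2) → ℤ) (Fin.last (n+1)) = (s:ℤ) ∧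
    (∀ i, 0 ≤ (Fin.snoc g.1 (s:ℤ) : Fin (n+2) → ℤ) i ∧
      (Fin.snoc g.1 (s:ℤ) : Fin (n+2) → ℤ) i ≤ (K:ℤ)) ∧
    (∀ i : Fin (n+1), |(Fin.snoc g.1 (s:ℤ) : Fin (n+2) → ℤ) i.succ -
      (Fin.snoc g.1 (s:ℤ) : Fin (n+2) → ℤ) i.castSucc| = 1) := by
  obtain ⟨h0, hl, hb, hst⟩ := g.2
  refine ⟨?_, ?_, ?_, ?_⟩
  · rw [show (0 : Fin (n+2)) = Fin.castSucc 0 from rfl, Fin.snoc_castSucc]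
    exact h0
  · rw [Fin.snoc_last]
  · intro i
    refine Fin.lastCases ?_ ?_ i
    · rw [Fin.snoc_last]
      exact ⟨by positivity, by exact_mod_cast hsK⟩
    · intro i'
      rw [Fin.snoc_castSucc]
      exact hb i'
  · intro i
    refine Fin.lastCases ?_ ?_ i
    · rw [Fin.succ_last, Fin.snoc_last, Fin.snoc_castSucc, hl]
      exact hdiff
    · intro i'
      rw [Fin.succ_castSucc, Fin.snoc_castSucc, Fin.snoc_castSucc]
      exact hst i'

noncomputable def pathEquiv (K n r s : ℕ) (hs : 1 ≤ s) (hsK : s ≤ K) :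
    PT K (n+1) r s ≃ (PT K n r (s-1)) ⊕ (PT K n r (s+1)) where
  toFun h :=
    if c : h.1 ((Fin.last n).castSucc) = (s:ℤ) - 1 then
      Sum.inl ⟨Fin.init h.1, init_prop K n r s (((s-1:ℕ)):ℤ) h
        (by rw [c, Nat.cast_sub hs]; norm_num)⟩
    else
      Sum.inr ⟨Fin.init h.1, init_prop K n r s (((s+1:ℕ)):ℤ) h
        (by
          rcases prev_cases K n r s h with h' | h'
          · exact absurd h' c
          · rw [h']; push_cast; ring)⟩
  invFun g :=
    match g with
    | Sum.inl g => ⟨Fin.snoc g.1 (s:ℤ), snoc_prop K n r s (s-1) g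
        (by rw [Nat.cast_sub hs]; norm_num) hsK⟩
    | Sum.inr g => ⟨Fin.snoc g.1 (s:ℤ), snoc_prop K n r s (s+1) g
        (by push_cast; norm_num) hsK⟩
  left_inv h := by
    have hl : h.1 (Fin.last (n+1)) = (s:ℤ) := h.2.2.1
    by_cases c : h.1 ((Fin.last n).castSucc) = (s:ℤ) - 1
    · simp only [dif_pos c]
      apply Subtype.ext
      show Fin.snoc (Fin.init h.1) ((s:ℕ):ℤ) = h.1
      have h2 := Fin.snoc_init_self h.1
      rw [hl] at h2
      exact h2
    · simp only [dif_neg c]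
      apply Subtype.ext
      show Fin.snoc (Fin.init h.1) ((s:ℕ):ℤ) = h.1
      have h2 := Fin.snoc_init_self h.1
      rw [hl] at h2
      exact h2
  right_inv g := by
    rcases g with g | g
    · have hc : (Fin.snoc g.1 (s:ℤ) : Fin (n+2) → ℤ) ((Fin.last n).castSucc) = (s:ℤ) - 1 := by
        rw [Fin.snoc_castSucc, g.2.2.1, Nat.cast_sub hs]
        norm_num
      simp only [hc, dif_pos]
      congr 1
      refine Subtype.ext ?_
      simp [Fin.init_snoc]
    · have hc : ¬ ((Fin.snoc g.1 (s:ℤ) : Fin (n+2) → ℤ) ((Fin.last n).castSucc) = (s:ℤ) - 1) := by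
        rw [Fin.snoc_castSucc, g.2.2.1]
        push_cast
        omega
      simp only [hc, dif_neg, not_false_iff]
      congr 1
      refine Subtype.ext ?_
      simp [Fin.init_snoc]

noncomputable def pathEquiv0 (K n r : ℕ) : PT K (n+1) r 0 ≃ PT K n r 1 where
  toFun h := ⟨Fin.init h.1, init_prop K n r 0 ((1:ℕ):ℤ) h
      (by
        rcases prev_cases K n r 0 h with h' | h'
        · exfalso
          have := (h.2.2.2.1 ((Fin.last n).castSucc)).1
          rw [h'] at this
          norm_num at this
        · rw [h']; norm_num)⟩
  invFun g := ⟨Fin.snoc g.1 ((0:ℕ):ℤ), snoc_prop K n r 0 1 g (by norm_num) (by omega)⟩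
  left_inv h := by
    have hl : h.1 (Fin.last (n+1)) = ((0:ℕ):ℤ) := h.2.2.1
    apply Subtype.ext
    show Fin.snoc (Fin.init h.1) ((0:ℕ):ℤ) = h.1
    have h2 := Fin.snoc_init_self h.1
    rw [hl] at h2
    exact h2
  right_inv g := by
    refine Subtype.ext ?_
    simp [Fin.init_snoc]

lemma pc_succ (K n r s : ℕ) (hs : 1 ≤ s) (hsK : s ≤ K) :
    pathCount K (n+1) r s = pathCount K n r (s-1) + pathCount K n r (s+1) := by
  rw [pathCount_eq, pathCount_eq, pathCount_eq, ← Nat.card_sum]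
  exact Nat.card_congr (pathEquiv K n r s hs hsK)

lemma pc_succ0 (K n r : ℕ) : pathCount K (n+1) r 0 = pathCount K n r 1 := by
  rw [pathCount_eq, pathCount_eq]
  exact Nat.card_congr (pathEquiv0 K n r)

lemma det_step (k : ℕ) (hk : 1 ≤ k) (n : ℕ) (hn : 1 ≤ n) :
    (Hk k (n+1)).det = ((k:ℤ)+1) * (Hk k n).det := by
  rw [hstep_mat k hk n hn, Matrix.det_mul, Cm_det k hk]
  ring

lemma det_all (k : ℕ) (hk : 1 ≤ k) : ∀ n : ℕ, (Hk k (n+1)).det = ((k:ℤ)+1)^n := by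
  intro n
  induction n with
  | zero => simpa using det_base k
  | succ n ih =>
    rw [det_step k hk (n+1) (by omega), ih, pow_succ]
    ring

lemma pc_fseq (k : ℕ) : ∀ m s, (pathCount (2*k) m 0 s : ℤ) = fseq k m s := by
  intro m
  induction m with
  | zero =>
    intro s
    rw [pc_zero]
    by_cases hs : s = 0 <;> simp [fseq, hs]
  | succ m ih =>
    intro s
    by_cases htop : 2*k < s
    · rw [pc_top _ _ _ _ htop, fseq_gt k _ s htop]
      norm_num
    · by_cases hs : s = 0
      · subst hs
        rw [pc_succ0, fseq_succ k m 0 (by omega), if_pos rfl, zero_add, zero_add, ih 1]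
      · rw [pc_succ (2*k) m 0 s (by omega) (by omega), fseq_succ k m s (by omega), if_neg hs]
        push_cast
        rw [ih (s-1), ih (s+1)]

end Stmt15

/-- Equation (12.1): `det(C_{2n+2i+2j}^{(2k)})_{0≤i,j≤k−1} = (k+1)^{n−1}`. -/
theorem statement15 (n k : ℕ) (hn : 1 ≤ n) (hk : 1 ≤ k) :
    Matrix.det (Matrix.of fun i j : Fin k =>
        (pathCount (2 * k) (2 * n + 2 * (i : ℕ) + 2 * (j : ℕ)) 0 0 : ℤ))
      = ((k : ℤ) + 1) ^ (n - 1) := by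
  obtain ⟨n', rfl⟩ : ∃ n', n = n'+1 := ⟨n-1, by omega⟩
  have hmat : (Matrix.of fun i j : Fin k =>
      (pathCount (2 * k) (2 * (n'+1) + 2 * (i : ℕ) + 2 * (j : ℕ)) 0 0 : ℤ))
      = Stmt15.Hk k (n'+1) := by
    ext i j
    show (pathCount (2 * k) (2 * (n'+1) + 2 * (i:ℕ) + 2 * (j:ℕ)) 0 0 : ℤ)
      = Stmt15.aseq k ((n'+1) + (i:ℕ) + (j:ℕ))
    rw [Stmt15.pc_fseq k _ 0]
    show Stmt15.fseq k (2 * (n'+1) + 2 * (i:ℕ) + 2 * (j:ℕ)) 0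
      = Stmt15.fseq k (2 * ((n'+1) + (i:ℕ) + (j:ℕ))) 0
    congr 1
    ring
  rw [hmat, Stmt15.det_all k hk n']
  congr 1
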